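/- arXiv:1007.0454 — 2 statements merged into one kernel-verified Lean document; each statement's English description precedes it below -/
import Mathlib

section
/- If (f, g, h) solves the system f_x + g_y = 0, f f_x + g f_y = -(1/ρ) h_x - τ_y, h_y = 0 (the inviscid case ν = 0 with shear stress τ), then for any ε ∈ ℝ the scaled functions f₁(x,y) = e^{2ε} f(x, e^{ε} y), g₁(x,y) = e^{ε} g(x, e^{ε} y), h₁(x,y) = e^{4ε} h(x, e^{ε} y) solve the same system with τ replaced by τ₁(x,y) = e^{3ε} τ(x, e^{ε} y). -/
/-- Partial derivative in the first variable. -/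
noncomputable def pdx (w : ℝ → ℝ → ℝ) (x y : ℝ) : ℝ := deriv (fun t => w t y) x
/-- Partial derivative in the second variable. -/
noncomputable def pdy (w : ℝ → ℝ → ℝ) (x y : ℝ) : ℝ := deriv (fun t => w x t) y
/-- Second partial derivative in the second variable. -/
noncomputable def pdyy (w : ℝ → ℝ → ℝ) (x y : ℝ) : ℝ := deriv (fun t => pdy w x t) y

lemma diff_fst {w : ℝ → ℝ → ℝ} (hw : ContDiff ℝ (⊤ : ℕ∞) (Function.uncurry w)) (y : ℝ) :
    Differentiable ℝ (fun t => w t y) := by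
  have : (fun t => w t y) = Function.uncurry w ∘ (fun t => (t, y)) := rfl
  rw [this]
  exact (hw.differentiable (by simp)).comp (differentiable_id.prodMk (differentiable_const _))

lemma diff_snd {w : ℝ → ℝ → ℝ} (hw : ContDiff ℝ (⊤ : ℕ∞) (Function.uncurry w)) (x : ℝ) :
    Differentiable ℝ (fun t => w x t) := by
  have : (fun t => w x t) = Function.uncurry w ∘ (fun t => (x, t)) := rfl
  rw [this]
  exact (hw.differentiable (by simp)).comp ((differentiable_const _).prodMk differentiable_id)

lemma pdx_scale {w : ℝ → ℝ → ℝ} (hw : ContDiff ℝ (⊤ : ℕ∞) (Function.uncurry w)) (c a x y : ℝ) :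
    pdx (fun x y => c * w x (a * y)) x y = c * pdx w x (a * y) := by
  unfold pdx
  rw [deriv_const_mul _ (diff_fst hw (a * y) x)]

lemma pdy_scale {w : ℝ → ℝ → ℝ} (hw : ContDiff ℝ (⊤ : ℕ∞) (Function.uncurry w)) (c a x y : ℝ) :
    pdy (fun x y => c * w x (a * y)) x y = c * a * pdy w x (a * y) := by
  unfold pdy
  have h1 : (fun t => c * w x (a * t)) = (fun s => c * w x s) ∘ (fun t => a * t) := rfl
  rw [h1, deriv_comp _ ((diff_snd hw x (a*y)).const_mul c) (by fun_prop),
    deriv_const_mul _ (diff_snd hw x (a*y))]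
  have : deriv (HMul.hMul a) y = a := by
    show deriv (fun t => a * t) y = a
    rw [deriv_const_mul_field']; simp
  rw [this]; ring

/-- Scaling symmetry generated by v5 in the inviscid case (ν = 0) with shear stress τ. -/
theorem stmt12 (ρ : ℝ) (hρ : ρ ≠ 0) (f g h τ : ℝ → ℝ → ℝ)
    (hf : ContDiff ℝ (⊤ : ℕ∞) (Function.uncurry f)) (hg : ContDiff ℝ (⊤ : ℕ∞) (Function.uncurry g))
    (hh : ContDiff ℝ (⊤ : ℕ∞) (Function.uncurry h)) (hτ : ContDiff ℝ (⊤ : ℕ∞) (Function.uncurry τ))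
    (eq1 : ∀ x y, pdx f x y + pdy g x y = 0)
    (eq2 : ∀ x y, f x y * pdx f x y + g x y * pdy f x y =
      -(1 / ρ) * pdx h x y - pdy τ x y)
    (eq3 : ∀ x y, pdy h x y = 0) (ε : ℝ) :
    let f₁ : ℝ → ℝ → ℝ := fun x y => Real.exp (2 * ε) * f x (Real.exp ε * y)
    let g₁ : ℝ → ℝ → ℝ := fun x y => Real.exp ε * g x (Real.exp ε * y)
    let h₁ : ℝ → ℝ → ℝ := fun x y => Real.exp (4 * ε) * h x (Real.exp ε * y)
    let τ₁ : ℝ → ℝ → ℝ := fun x y => Real.exp (3 * ε) * τ x (Real.exp ε * y)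
    (∀ x y, pdx f₁ x y + pdy g₁ x y = 0) ∧
    (∀ x y, f₁ x y * pdx f₁ x y + g₁ x y * pdy f₁ x y =
      -(1 / ρ) * pdx h₁ x y - pdy τ₁ x y) ∧
    (∀ x y, pdy h₁ x y = 0) := by
  intro f₁ g₁ h₁ τ₁
  have E2 : Real.exp (2*ε) = Real.exp ε ^ 2 := by
    rw [two_mul, Real.exp_add]; ring
  have E3 : Real.exp (3*ε) = Real.exp ε ^ 3 := by
    rw [show (3:ℝ)*ε = ε+ε+ε by ring, Real.exp_add, Real.exp_add]; ring
  have E4 : Real.exp (4*ε) = Real.exp ε ^ 4 := by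
    rw [show (4:ℝ)*ε = ε+ε+ε+ε by ring, Real.exp_add, Real.exp_add, Real.exp_add]; ring
  refine ⟨fun x y => ?_, fun x y => ?_, fun x y => ?_⟩
  · show pdx (fun x y => Real.exp (2*ε) * f x (Real.exp ε * y)) x y
      + pdy (fun x y => Real.exp ε * g x (Real.exp ε * y)) x y = 0
    rw [pdx_scale hf, pdy_scale hg, E2]
    linear_combination Real.exp ε ^ 2 * eq1 x (Real.exp ε * y)
  · show (Real.exp (2*ε) * f x (Real.exp ε * y)) *
        pdx (fun x y => Real.exp (2*ε) * f x (Real.exp ε * y)) x y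
      + (Real.exp ε * g x (Real.exp ε * y)) *
        pdy (fun x y => Real.exp (2*ε) * f x (Real.exp ε * y)) x y
      = -(1/ρ) * pdx (fun x y => Real.exp (4*ε) * h x (Real.exp ε * y)) x y
        - pdy (fun x y => Real.exp (3*ε) * τ x (Real.exp ε * y)) x y
    rw [pdx_scale hf, pdy_scale hf, pdx_scale hh, pdy_scale hτ, E2, E3, E4]
    linear_combination Real.exp ε ^ 4 * eq2 x (Real.exp ε * y)
  · show pdy (fun x y => Real.exp (4*ε) * h x (Real.exp ε * y)) x y = 0
    rw [pdy_scale hh]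
    linear_combination Real.exp (4*ε) * Real.exp ε * eq3 x (Real.exp ε * y)
end

section
/- A smooth function I : ℝ⁵ → ℝ (variables x, y, u, v, p) satisfies all five equations ∂_x I = 0, ∂_y I = 0, ∂_p I = 0, x ∂_x I + u ∂_u I + 2p ∂_p I = 0, and y ∂_y I - 2u ∂_u I - v ∂_v I - 4p ∂_p I = 0 on all of ℝ⁵ if and only if I is constant. -/
/-- A smooth function I(x,y,u,v,p) on ℝ⁵ (coordinates q 0,…,q 4 = x,y,u,v,p) is
annihilated by ∂x, ∂y, ∂p, x∂x + u∂u + 2p∂p, and y∂y - 2u∂u - v∂v - 4p∂p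
everywhere if and only if it is constant. -/
theorem stmt14 (I : (Fin 5 → ℝ) → ℝ) (hI : ContDiff ℝ (⊤ : ℕ∞) I) :
    (∀ q : Fin 5 → ℝ,
      fderiv ℝ I q (Pi.single 0 1) = 0 ∧
      fderiv ℝ I q (Pi.single 1 1) = 0 ∧
      fderiv ℝ I q (Pi.single 4 1) = 0 ∧
      q 0 * fderiv ℝ I q (Pi.single 0 1) + q 2 * fderiv ℝ I q (Pi.single 2 1)
        + 2 * q 4 * fderiv ℝ I q (Pi.single 4 1) = 0 ∧
      q 1 * fderiv ℝ I q (Pi.single 1 1) - 2 * q 2 * fderiv ℝ I q (Pi.single 2 1)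
        - q 3 * fderiv ℝ I q (Pi.single 3 1) - 4 * q 4 * fderiv ℝ I q (Pi.single 4 1) = 0)
    ↔ ∃ c : ℝ, ∀ q, I q = c := by
  constructor
  · intro h
    have hc : Continuous fun q => fderiv ℝ I q := hI.continuous_fderiv (by simp)
    have hcont : ∀ v : Fin 5 → ℝ, Continuous fun q => fderiv ℝ I q v :=
      fun v => hc.clm_apply continuous_const
    -- a general continuity-extension lemma for a coordinate
    have ext0 : ∀ (i : Fin 5) (g : (Fin 5 → ℝ) → ℝ), Continuous g →
        (∀ q : Fin 5 → ℝ, q i ≠ 0 → g q = 0) → ∀ q, g q = 0 := by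
      intro i g hg hne q
      by_cases hq : q i = 0
      · have hup : Continuous fun t : ℝ => Function.update q i t :=
          continuous_const.update i continuous_id
        have hT : Filter.Tendsto (fun t : ℝ => g (Function.update q i t))
            (nhdsWithin (0:ℝ) {(0:ℝ)}ᶜ) (nhds (g q)) := by
          have h1 := (hg.comp hup).tendsto 0
          have h2 : Function.update q i (0:ℝ) = q := by
            rw [← hq]; exact Function.update_eq_self i q
          simpa [h2, Function.comp_def] using h1.mono_left nhdsWithin_le_nhds
        have hE : Filter.Tendsto (fun t : ℝ => g (Function.update q i t))
            (nhdsWithin (0:ℝ) {(0:ℝ)}ᶜ) (nhds 0) := by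
          apply Filter.Tendsto.congr' _ tendsto_const_nhds
          filter_upwards [self_mem_nhdsWithin] with t ht
          exact (hne _ (by simpa using ht)).symm
        exact tendsto_nhds_unique hT hE
      · exact hne q hq
    have h2 : ∀ q, fderiv ℝ I q (Pi.single 2 1) = 0 := by
      apply ext0 2 _ (hcont _)
      intro q hq
      obtain ⟨e0, e1, e4, e3, e5⟩ := h q
      rw [e0, e4] at e3
      have : q 2 * fderiv ℝ I q (Pi.single 2 1) = 0 := by linarith
      exact (mul_eq_zero.mp this).resolve_left hq
    have h3 : ∀ q, fderiv ℝ I q (Pi.single 3 1) = 0 := by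
      apply ext0 3 _ (hcont _)
      intro q hq
      obtain ⟨e0, e1, e4, e3, e5⟩ := h q
      rw [e1, e4, h2 q] at e5
      have : q 3 * fderiv ℝ I q (Pi.single 3 1) = 0 := by linarith
      exact (mul_eq_zero.mp this).resolve_left hq
    have key : ∀ q, fderiv ℝ I q = 0 := by
      intro q
      ext v
      have hv : v = ∑ i : Fin 5, v i • (Pi.single i 1 : Fin 5 → ℝ) := by
        ext j
        simp [Pi.single_apply, Finset.sum_apply, mul_comm]
      obtain ⟨e0, e1, e4, -, -⟩ := h q
      rw [hv]
      rw [map_sum]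
      have : ∀ i : Fin 5, fderiv ℝ I q (v i • (Pi.single i 1 : Fin 5 → ℝ)) = 0 := by
        intro i
        rw [map_smul]
        fin_cases i <;> simp [e0, e1, e4, h2 q, h3 q]
      simp [this]
    refine ⟨I 0, fun q => ?_⟩
    exact is_const_of_fderiv_eq_zero (hI.differentiable (by simp)) key q 0
  · rintro ⟨c, hc⟩ q
    have : I = fun _ => c := funext hc
    subst this
    simp [fderiv_const]
end
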